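/- Let T = {t_1 < t_2 < ... < t_{2m}} be a set of positive integers. Then the sum of s_{λ(A)}(x_1,...,x_n) · s_{λ(B)}(x_1,...,x_n), taken over all ordered pairs of disjoint sets A, B with A ∪ B = T and |A| = |B| = m, equals 2^m · s_{λ(t_2, t_4, ..., t_{2m})}(x_1,...,x_n) · s_{λ(t_1, t_3, ..., t_{2m-1})}(x_1,...,x_n). -/

import Mathlib

open Finset

/-- Complete homogeneous symmetric function `h_k` in `n` variables (0 for `k < 0`). -/
def hZ (n : ℕ) (k : ℤ) (x : Fin n → ℚ) : ℚ :=
  if 0 ≤ k then ∑ d ∈ Finset.Nat.antidiagonalTuple n k.toNat, ∏ i, x i ^ d i else 0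

/-- For a finite set `A = {a_1 < … < a_m}` of naturals, the Schur function
`s_{λ(A)}` in `n` variables, `λ(A) = (a_m - m + 1, …, a_2 - 1, a_1)`,
via the Jacobi–Trudi determinant. -/
def schurF (n : ℕ) (A : Finset ℕ) (x : Fin n → ℚ) : ℚ :=
  Matrix.det (Matrix.of fun i j : Fin A.card =>
    hZ n ((A.orderEmbOfFin rfl i.rev : ℤ) - (i.rev : ℕ) - (i : ℕ) + (j : ℕ)) x)

/-!
Listing the parts of `T` in increasing order, their Jacobi–Trudi rows form a `2m × m` matrix `V`,
and `s_{λ(A)}` is, up to a sign depending only on `m`, the maximal minor of `V` on the rows of `A`.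
So the identity is `∑_S det V_S · det V_{Sᶜ} = 2^m · det V_even · det V_odd` for an arbitrary
`2m × m` matrix `V`. To see it, expand the determinant of the `2m × 2m` matrix `(V | DV)`, where
`D = diag((-1)^i)`, by Laplace along its first `m` columns. Listing the even rows first, this
matrix becomes `[[P, P], [Q, -Q]]`, of determinant `(-2)^m det P det Q`; on the other side the
Laplace sign `(-1)^(∑ S + ∑ evens)` and the factor `(-1)^(∑ Sᶜ)` contributed by `D` multiply to
`(-1)^m` for every `S`.
-/

open Equiv

namespace Finset

section orderEmbOfFin

variable {α β : Type*} [LinearOrder α] [LinearOrder β]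

theorem orderEmbOfFin_eq_apply_orderEmbOfFin {s : Finset α} {t : Finset β} {k : ℕ}
    {f : α → β} (hf : StrictMonoOn f s) (hst : ∀ a ∈ s, f a ∈ t) (hs : s.card = k)
    (ht : t.card = k) (i : Fin k) :
    t.orderEmbOfFin ht i = f (s.orderEmbOfFin hs i) := by
  refine (congrFun (orderEmbOfFin_unique ht (fun j => hst _ (orderEmbOfFin_mem s hs j))
    fun i j hij => hf (orderEmbOfFin_mem s hs i) (orderEmbOfFin_mem s hs j) ?_) i).symm
  exact (s.orderEmbOfFin hs).strictMono hij

theorem sum_orderEmbOfFin {M : Type*} [AddCommMonoid M] (s : Finset α) {k : ℕ}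
    (h : s.card = k) (g : α → M) : ∑ i, g (s.orderEmbOfFin h i) = ∑ a ∈ s, g a := by
  conv_rhs => rw [← map_orderEmbOfFin_univ s h, sum_map]
  rfl

theorem sum_powersetCard_sdiff_eq_sum_subtype {M : Type*} [AddCommMonoid M] {N : ℕ}
    (T : Finset α) (hT : T.card = N) (k : ℕ) (g : Finset α → Finset α → M) :
    ∑ A ∈ T.powersetCard k, g A (T \ A) =
      ∑ S : {S : Finset (Fin N) // S.card = k},
        g (S.1.map (T.orderEmbOfFin hT).toEmbedding)
          (S.1ᶜ.map (T.orderEmbOfFin hT).toEmbedding) := by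
  conv_lhs => rw [← map_orderEmbOfFin_univ T hT, powersetCard_map, sum_map]
  simp only [RelEmbedding.coe_toEmbedding, mapEmbedding_apply, ← Finset.map_sdiff,
    ← compl_eq_univ_sdiff]
  exact sum_subtype _ (fun S => mem_powersetCard_univ) fun S => g _ _

end orderEmbOfFin

variable {m k N : ℕ}

theorem strictMonoOn_swap_of_val_add_one_eq {a b : Fin N} (hab : (a : ℕ) + 1 = b)
    {s : Set (Fin N)} (hs : ¬(a ∈ s ∧ b ∈ s)) : StrictMonoOn (swap a b) s := by
  intro x hx y hy hxy
  have hxy' : ¬(x = a ∧ y = b) := by rintro ⟨rfl, rfl⟩; exact hs ⟨hx, hy⟩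
  simp only [swap_apply_def]
  split_ifs <;> simp only [Fin.lt_def, Fin.ext_iff] at * <;> omega

theorem sum_val_map_swap_add_one {S : Finset (Fin N)} {a b : Fin N} (hab : (a : ℕ) + 1 = b)
    (ha : a ∉ S) (hb : b ∈ S) :
    ∑ i ∈ S.map (swap a b).toEmbedding, (i : ℕ) + 1 = ∑ i ∈ S, (i : ℕ) := by
  have hterm : ∀ i ∈ S, (i : ℕ) = (swap a b i : ℕ) + if i = b then 1 else 0 := by
    intro i hi
    have hia : i ≠ a := fun h => ha (h ▸ hi)
    by_cases hib : i = b
    · subst hib; simp [hab]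
    · simp [swap_apply_of_ne_of_ne hia hib, hib]
  rw [sum_congr rfl hterm, sum_add_distrib, sum_ite_eq' S b, if_pos hb, sum_map]
  rfl

theorem exists_val_add_one_eq_of_ne_filter {S : Finset (Fin N)} (hS : S.card = m)
    (hSB : S ≠ univ.filter fun i : Fin N => (i : ℕ) < m) :
    ∃ a b : Fin N, (a : ℕ) + 1 = b ∧ a ∉ S ∧ b ∈ S := by
  by_contra! H
  have hdown : ∀ b ∈ S, ∀ a : Fin N, a ≤ b → a ∈ S := by
    intro b hb a hab
    obtain ⟨d, hd⟩ : ∃ d, (a : ℕ) + d = b := ⟨b - a, by have : (a : ℕ) ≤ b := hab; omega⟩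
    induction d generalizing a with
    | zero => rwa [show a = b from Fin.ext (by simpa using hd)]
    | succ d ih =>
      by_contra ha
      exact H a ⟨a + 1, by omega⟩ rfl ha (ih _ (Fin.le_def.2 (by simp; omega)) (by simp; omega))
  refine hSB (eq_of_subset_of_card_le (fun b hb => ?_) ?_)
  · have := card_le_card fun a ha => hdown b hb a (mem_Iic.1 ha)
    rw [Fin.card_Iic] at this
    simp only [mem_filter, mem_univ, true_and]
    omega
  · rw [hS, Fin.card_filter_val_lt]
    have := card_le_univ S
    simp only [Fintype.card_fin] at this
    omega

theorem card_compl_of_card_eq (hN : m + k = N) {S : Finset (Fin N)} (hS : S.card = m) :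
    Sᶜ.card = k := by
  rw [card_compl, Fintype.card_fin]; omega

noncomputable def shuffleEquiv (hN : m + k = N) (S : Finset (Fin N)) (hS : S.card = m) :
    Fin m ⊕ Fin k ≃ Fin N :=
  (Equiv.sumCongr (S.orderIsoOfFin hS).toEquiv
      ((Sᶜ.orderIsoOfFin (card_compl_of_card_eq hN hS)).toEquiv.trans
        (Equiv.subtypeEquivRight fun _ => mem_compl))).trans
    (Equiv.sumCompl (· ∈ S))

variable (hN : m + k = N)

@[simp]
theorem shuffleEquiv_inl {S : Finset (Fin N)} (hS : S.card = m) (i : Fin m) :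
    shuffleEquiv hN S hS (.inl i) = S.orderEmbOfFin hS i :=
  rfl

@[simp]
theorem shuffleEquiv_inr {S : Finset (Fin N)} (hS : S.card = m) (i : Fin k) :
    shuffleEquiv hN S hS (.inr i) = Sᶜ.orderEmbOfFin (card_compl_of_card_eq hN hS) i :=
  rfl

theorem shuffleEquiv_symm_mem_range_inl {S : Finset (Fin N)} (hS : S.card = m) {x : Fin N}
    (hx : x ∈ S) : (shuffleEquiv hN S hS).symm x ∈ Set.range Sum.inl := by
  obtain ⟨i, rfl⟩ : x ∈ Set.range (S.orderEmbOfFin hS) := by simpa using hx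
  exact ⟨i, by rw [← shuffleEquiv_inl hN hS, symm_apply_apply]⟩

theorem shuffleEquiv_map {S : Finset (Fin N)} (hS : S.card = m) {g : Perm (Fin N)}
    (hg : StrictMonoOn g S) (hgc : StrictMonoOn g ↑(Sᶜ)) (hgS : (S.map g.toEmbedding).card = m) :
    shuffleEquiv hN (S.map g.toEmbedding) hgS = (shuffleEquiv hN S hS).trans g := by
  refine Equiv.ext fun x => ?_
  rcases x with i | i <;> simp only [shuffleEquiv_inl, shuffleEquiv_inr, trans_apply]
  · exact orderEmbOfFin_eq_apply_orderEmbOfFin hg (fun a ha => mem_map_of_mem _ ha) _ _ i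
  · exact orderEmbOfFin_eq_apply_orderEmbOfFin (t := (S.map g.toEmbedding)ᶜ) hgc
      (fun a ha => by simpa using ha) _ _ i

theorem bijective_sumCongr_trans_shuffleEquiv :
    Function.Bijective fun p : {S : Finset (Fin N) // S.card = m} × Perm (Fin m) × Perm (Fin k) =>
      (sumCongr p.2.1 p.2.2).trans (shuffleEquiv hN p.1.1 p.1.2) := by
  constructor
  · rintro ⟨⟨S, hS⟩, σ, τ⟩ ⟨⟨S', hS'⟩, σ', τ'⟩ h
    have himage (S : Finset (Fin N)) (hS : S.card = m) (σ : Perm (Fin m)) (τ : Perm (Fin k)) :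
        univ.image (fun i => (sumCongr σ τ).trans (shuffleEquiv hN S hS) (.inl i)) = S := by
      change univ.image (S.orderEmbOfFin hS ∘ σ) = S
      rw [image_comp, image_univ_equiv, image_orderEmbOfFin_univ]
    obtain rfl : S = S' := (himage S hS σ τ).symm.trans (by simp only at h; rw [h, himage])
    have hστ : Perm.sumCongrHom _ _ (σ, τ) = Perm.sumCongrHom _ _ (σ', τ') := by
      simpa [trans_assoc] using congrArg (·.trans (shuffleEquiv hN S hS).symm) h
    obtain ⟨rfl, rfl⟩ := Prod.ext_iff.1 (Perm.sumCongrHom_injective hστ)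
    rfl
  · intro ρ
    set S := univ.map (Function.Embedding.inl.trans ρ.toEmbedding)
    have hS : S.card = m := by simp [S]
    have hmaps : Set.MapsTo (ρ.trans (shuffleEquiv hN S hS).symm) (Set.range .inl)
        (Set.range .inl) := by
      rintro _ ⟨i, rfl⟩
      exact shuffleEquiv_symm_mem_range_inl hN hS (mem_map_of_mem _ (mem_univ i))
    obtain ⟨⟨σ, τ⟩, hστ⟩ := Perm.mem_sumCongrHom_range_of_perm_mapsTo_inl hmaps
    refine ⟨⟨⟨S, hS⟩, σ, τ⟩, ?_⟩
    simp only [Perm.sumCongrHom_apply] at hστ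
    simp only [hστ, trans_assoc, symm_trans_self, trans_refl]

-- Induction on `∑ S`: an adjacent transposition moving an element of `S` down changes both the
-- sign and `∑ S` by one.
theorem sign_shuffleEquiv_filter_symm_trans {S : Finset (Fin N)} (hS : S.card = m)
    (hB : (univ.filter fun i : Fin N => (i : ℕ) < m).card = m) :
    Perm.sign ((shuffleEquiv hN _ hB).symm.trans (shuffleEquiv hN S hS)) =
      (-1) ^ (∑ i ∈ S, (i : ℕ) + ∑ i ∈ univ.filter fun i : Fin N => (i : ℕ) < m, (i : ℕ)) := by
  induction hw : ∑ i ∈ S, (i : ℕ) using Nat.strong_induction_on generalizing S with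
  | _ w ih =>
  by_cases hSB : S = univ.filter fun i : Fin N => (i : ℕ) < m
  · subst hSB hw
    rw [symm_trans_self, Perm.sign_refl, ← two_mul, pow_mul]
    simp
  obtain ⟨a, b, hab, ha, hb⟩ := exists_val_add_one_eq_of_ne_filter hS hSB
  have hS₁ : (S.map (swap a b).toEmbedding).card = m := by rw [card_map, hS]
  have hshuffle := shuffleEquiv_map hN hS
    (strictMonoOn_swap_of_val_add_one_eq hab fun h => ha h.1)
    (strictMonoOn_swap_of_val_add_one_eq hab fun h => (mem_compl.1 h.2) hb) hS₁
  have hsum := sum_val_map_swap_add_one hab ha hb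
  have h₁ := ih _ (by omega) hS₁ rfl
  rw [hshuffle, ← trans_assoc, Perm.sign_trans,
    Perm.sign_swap fun h => by rw [h] at hab; omega] at h₁
  rw [← hw, ← hsum, add_right_comm, pow_succ, ← h₁]
  simp

theorem sign_shuffleEquiv_symm_trans {S S' : Finset (Fin N)} (hS : S.card = m)
    (hS' : S'.card = m) :
    Perm.sign ((shuffleEquiv hN S' hS').symm.trans (shuffleEquiv hN S hS)) =
      (-1) ^ (∑ i ∈ S, (i : ℕ) + ∑ i ∈ S', (i : ℕ)) := by
  have hB : (univ.filter fun i : Fin N => (i : ℕ) < m).card = m := by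
    rw [Fin.card_filter_val_lt]; omega
  set e := shuffleEquiv hN _ hB
  rw [show (shuffleEquiv hN S' hS').symm.trans (shuffleEquiv hN S hS) =
      (e.symm.trans (shuffleEquiv hN S' hS')).symm.trans (e.symm.trans (shuffleEquiv hN S hS)) by
    ext; simp,
    Perm.sign_trans, Perm.sign_symm, sign_shuffleEquiv_filter_symm_trans hN hS,
    sign_shuffleEquiv_filter_symm_trans hN hS', ← pow_add]
  rw [show ∀ p q r : ℕ, p + r + (q + r) = p + q + 2 * r by intros; ring, pow_add, pow_mul]
  simp

end Finset

namespace Fin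

def evens (m : ℕ) : Finset (Fin (2 * m)) :=
  univ.map ⟨fun i : Fin m => ⟨2 * i, by omega⟩, fun i j h => Fin.ext (by simpa using h)⟩

variable {m : ℕ}

theorem card_evens : (evens m).card = m := by simp [evens]

theorem mem_evens {c : Fin (2 * m)} : c ∈ evens m ↔ Even (c : ℕ) := by
  simp only [evens, mem_map, mem_univ, true_and]
  constructor
  · rintro ⟨i, rfl⟩
    exact even_two_mul _
  · rintro ⟨r, hr⟩
    have := c.isLt
    exact ⟨⟨r, by omega⟩, Fin.ext (show 2 * r = (c : ℕ) by omega)⟩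

theorem orderEmbOfFin_evens (h : (evens m).card = m) (i : Fin m) :
    (evens m).orderEmbOfFin h i = ⟨2 * i, by omega⟩ :=
  (congrFun (orderEmbOfFin_unique h (f := fun i : Fin m => ⟨2 * i, by omega⟩)
    (fun i => mem_evens.2 (even_two_mul _))
    fun i j hij => Fin.mk_lt_mk.2 (by have := Fin.lt_def.1 hij; omega)) i).symm

theorem orderEmbOfFin_compl_evens (h : (evens m)ᶜ.card = m) (i : Fin m) :
    (evens m)ᶜ.orderEmbOfFin h i = ⟨2 * i + 1, by omega⟩ :=
  (congrFun (orderEmbOfFin_unique h (f := fun i : Fin m => ⟨2 * i + 1, by omega⟩)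
    (fun i => by simp [mem_evens])
    fun i j hij => Fin.mk_lt_mk.2 (by have := Fin.lt_def.1 hij; omega)) i).symm

theorem sum_val_compl_evens : ∑ i ∈ (evens m)ᶜ, (i : ℕ) = 2 * ∑ i : Fin m, (i : ℕ) + m := by
  rw [← sum_orderEmbOfFin _ (card_compl_of_card_eq (two_mul m).symm card_evens)]
  simp [orderEmbOfFin_compl_evens, sum_add_distrib, mul_sum]

theorem neg_one_pow_sum_add_sum_evens_mul {R : Type*} [Monoid R] [HasDistribNeg R]
    (S : Finset (Fin (2 * m))) :
    (-1 : R) ^ (∑ i ∈ S, (i : ℕ) + ∑ i ∈ evens m, (i : ℕ)) * (-1) ^ ∑ i ∈ Sᶜ, (i : ℕ) =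
      (-1) ^ m := by
  have hS := sum_add_sum_compl S fun i => (i : ℕ)
  have hE := sum_add_sum_compl (evens m) fun i => (i : ℕ)
  rw [sum_val_compl_evens] at hE
  rw [← pow_add, show ∑ i ∈ S, (i : ℕ) + ∑ i ∈ evens m, (i : ℕ) + ∑ i ∈ Sᶜ, (i : ℕ) =
    2 * (∑ i ∈ evens m, (i : ℕ) + ∑ i : Fin m, (i : ℕ)) + m by omega, pow_add, pow_mul]
  simp

end Fin

namespace Matrix

variable {R : Type*} [CommRing R] {m k N : ℕ}

/-- Laplace expansion along the first block of columns. -/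
theorem det_submatrix_shuffleEquiv (hN : m + k = N) (M : Matrix (Fin N) (Fin m ⊕ Fin k) R)
    {S₀ : Finset (Fin N)} (hS₀ : S₀.card = m) :
    (M.submatrix (shuffleEquiv hN S₀ hS₀) id).det =
      ∑ S : {S : Finset (Fin N) // S.card = m},
        (-1) ^ (∑ i ∈ S.1, (i : ℕ) + ∑ i ∈ S₀, (i : ℕ)) *
          (M.submatrix (S.1.orderEmbOfFin S.2) Sum.inl).det *
          (M.submatrix (S.1ᶜ.orderEmbOfFin (card_compl_of_card_eq hN S.2)) Sum.inr).det := by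
  set e := shuffleEquiv hN S₀ hS₀
  calc (M.submatrix e id).det
      = ∑ ρ : Fin m ⊕ Fin k ≃ Fin N, Perm.sign (ρ.trans e.symm) • ∏ c, M (ρ c) c := by
        rw [det_apply]
        refine Fintype.sum_equiv (equivCongr (Equiv.refl _) e) _ _ fun π => ?_
        simp [trans_assoc]
    _ = ∑ p : {S : Finset (Fin N) // S.card = m} × Perm (Fin m) × Perm (Fin k),
          Perm.sign (((sumCongr p.2.1 p.2.2).trans (shuffleEquiv hN p.1.1 p.1.2)).trans e.symm) •
            ∏ c, M ((sumCongr p.2.1 p.2.2).trans (shuffleEquiv hN p.1.1 p.1.2) c) c :=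
        (Fintype.sum_bijective _ (bijective_sumCongr_trans_shuffleEquiv hN) _ _ fun _ => rfl).symm
    _ = _ := by
      rw [Fintype.sum_prod_type]
      refine Fintype.sum_congr _ _ fun S => ?_
      have hsign : Perm.sign ((shuffleEquiv hN S.1 S.2).trans e.symm) =
          (-1) ^ (∑ i ∈ S.1, (i : ℕ) + ∑ i ∈ S₀, (i : ℕ)) := by
        rw [← Perm.sign_symm_trans_trans _ e, ← sign_shuffleEquiv_symm_trans hN S.2 hS₀]
        congr 1
        ext
        simp [e]
      rw [det_apply, det_apply, mul_assoc, Finset.sum_mul_sum, Fintype.sum_prod_type]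
      simp only [Finset.mul_sum]
      refine Fintype.sum_congr _ _ fun σ => Fintype.sum_congr _ _ fun τ => ?_
      rw [trans_assoc, Perm.sign_trans, Perm.sign_sumCongr, hsign, Fintype.prod_sum_type]
      simp only [Units.smul_def, zsmul_eq_mul, trans_apply, sumCongr_apply, Sum.map_inl,
        Sum.map_inr, shuffleEquiv_inl, shuffleEquiv_inr, submatrix_apply]
      push_cast
      ring

theorem det_fromBlocks_self_neg {n : Type*} [Fintype n] [DecidableEq n] (P Q : Matrix n n R) :
    (fromBlocks P P Q (-Q)).det = (-2) ^ Fintype.card n * P.det * Q.det := by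
  have hfactor : fromBlocks P P Q (-Q) = fromBlocks P 0 Q ((-2 : R) • Q) * fromBlocks 1 1 0 1 := by
    simp only [fromBlocks_multiply, Matrix.mul_one, Matrix.mul_zero, add_zero]
    congr 1
    module
  rw [hfactor, det_mul, det_fromBlocks_zero₁₂, det_fromBlocks_zero₂₁, det_smul]
  simp only [det_one, mul_one]
  ring

theorem det_submatrix_neg_one_pow_mul (V : Matrix (Fin N) (Fin m) R) {S : Finset (Fin N)}
    (hS : S.card = m) :
    ((of fun (c : Fin N) j => (-1 : R) ^ (c : ℕ) * V c j).submatrix (S.orderEmbOfFin hS) id).det =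
      (-1) ^ (∑ i ∈ S, (i : ℕ)) * (V.submatrix (S.orderEmbOfFin hS) id).det := by
  rw [← sum_orderEmbOfFin S hS, ← prod_pow_eq_pow_sum, ← det_mul_column]
  rfl

theorem fromCols_submatrix_shuffleEquiv_evens (V : Matrix (Fin (2 * m)) (Fin m) R) :
    (fromCols V (of fun (c : Fin (2 * m)) j => (-1 : R) ^ (c : ℕ) * V c j)).submatrix
        (shuffleEquiv (two_mul m).symm (Fin.evens m) Fin.card_evens) id =
      fromBlocks (V.submatrix (fun i : Fin m => ⟨2 * i, by omega⟩) id)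
        (V.submatrix (fun i : Fin m => ⟨2 * i, by omega⟩) id)
        (V.submatrix (fun i : Fin m => ⟨2 * i + 1, by omega⟩) id)
        (-V.submatrix (fun i : Fin m => ⟨2 * i + 1, by omega⟩) id) := by
  ext (i | i) (j | j) <;>
    simp [Fin.orderEmbOfFin_evens, Fin.orderEmbOfFin_compl_evens, pow_mul, pow_succ]

theorem sum_det_submatrix_mul_det_submatrix_compl (V : Matrix (Fin (2 * m)) (Fin m) R) :
    ∑ S : {S : Finset (Fin (2 * m)) // S.card = m},
        (V.submatrix (S.1.orderEmbOfFin S.2) id).det *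
          (V.submatrix (S.1ᶜ.orderEmbOfFin (card_compl_of_card_eq (two_mul m).symm S.2)) id).det =
      2 ^ m * (V.submatrix (fun i : Fin m => ⟨2 * i, by omega⟩) id).det *
        (V.submatrix (fun i : Fin m => ⟨2 * i + 1, by omega⟩) id).det := by
  have hN : m + m = 2 * m := (two_mul m).symm
  set D := of fun (c : Fin (2 * m)) j => (-1 : R) ^ (c : ℕ) * V c j
  have hterm (S : {S : Finset (Fin (2 * m)) // S.card = m}) :
      (-1) ^ (∑ i ∈ S.1, (i : ℕ) + ∑ i ∈ Fin.evens m, (i : ℕ)) *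
          ((fromCols V D).submatrix (S.1.orderEmbOfFin S.2) Sum.inl).det *
          ((fromCols V D).submatrix (S.1ᶜ.orderEmbOfFin (card_compl_of_card_eq hN S.2))
            Sum.inr).det =
        (-1) ^ m * ((V.submatrix (S.1.orderEmbOfFin S.2) id).det *
          (V.submatrix (S.1ᶜ.orderEmbOfFin (card_compl_of_card_eq hN S.2)) id).det) := by
    change _ * (V.submatrix _ id).det * (D.submatrix _ id).det = _
    rw [det_submatrix_neg_one_pow_mul, ← Fin.neg_one_pow_sum_add_sum_evens_mul S.1]
    ring
  have hlaplace := det_submatrix_shuffleEquiv hN (fromCols V D) Fin.card_evens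
  rw [fromCols_submatrix_shuffleEquiv_evens, det_fromBlocks_self_neg, Fintype.card_fin,
    Fintype.sum_congr _ _ hterm, ← Finset.mul_sum] at hlaplace
  refine (isUnit_neg_one.pow m).mul_left_cancel ?_
  rw [← hlaplace, show (-2 : R) = -1 * 2 by norm_num, mul_pow]
  ring

end Matrix

-- `schurF` lists these rows in decreasing order of the parts, whence the sign of `Fin.revPerm`.
def jacobiTrudiRows {ι : Type*} (n m : ℕ) (x : Fin n → ℚ) (f : ι → ℕ) : Matrix ι (Fin m) ℚ :=
  Matrix.of fun c j => hZ n ((f c : ℤ) + j - (m - 1)) x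

theorem schurF_eq_sign_mul_det {n m : ℕ} (x : Fin n → ℚ) {A : Finset ℕ} (hA : A.card = m)
    {g : Fin m → ℕ} (hg : StrictMono g) (hgA : ∀ i, g i ∈ A) :
    schurF n A x = Perm.sign (Fin.revPerm : Perm (Fin m)) * (jacobiTrudiRows n m x g).det := by
  subst hA
  obtain rfl : g = A.orderEmbOfFin rfl := orderEmbOfFin_unique rfl hgA hg
  rw [schurF, ← Matrix.det_permute]
  congr 1
  ext i j
  simp only [jacobiTrudiRows, Matrix.of_apply, Matrix.submatrix_apply, Fin.revPerm_apply, id,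
    Fin.val_rev]
  congr 1
  omega

theorem sum_schurF_map_mul_schurF_map_compl {m : ℕ} (n : ℕ) (x : Fin n → ℚ)
    (t : Fin (2 * m) ↪o ℕ) :
    ∑ S : {S : Finset (Fin (2 * m)) // S.card = m},
        schurF n (S.1.map t.toEmbedding) x * schurF n (S.1ᶜ.map t.toEmbedding) x =
      2 ^ m * schurF n (univ.image fun i : Fin m => t ⟨2 * i + 1, by omega⟩) x *
        schurF n (univ.image fun i : Fin m => t ⟨2 * i, by omega⟩) x := by
  set V := jacobiTrudiRows n m x t
  set ε : ℚ := ((Perm.sign (Fin.revPerm : Perm (Fin m)) : ℤ) : ℚ)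
  have hmap {S : Finset (Fin (2 * m))} (hS : S.card = m) :
      schurF n (S.map t.toEmbedding) x = ε * (V.submatrix (S.orderEmbOfFin hS) id).det :=
    schurF_eq_sign_mul_det x (by rw [card_map, hS])
      (t.strictMono.comp (S.orderEmbOfFin hS).strictMono)
      fun i => mem_map_of_mem _ (orderEmbOfFin_mem S hS i)
  have himage {g : Fin m → Fin (2 * m)} (hg : StrictMono g) :
      schurF n (univ.image fun i => t (g i)) x = ε * (V.submatrix g id).det :=
    schurF_eq_sign_mul_det x (by rw [card_image_of_injective (f := fun i => t (g i)) _
      (t.strictMono.comp hg).injective, card_fin]) (t.strictMono.comp hg)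
      fun i => mem_image_of_mem _ (mem_univ i)
  rw [himage (g := fun i : Fin m => ⟨2 * i + 1, by omega⟩)
      fun i j h => Fin.mk_lt_mk.2 (by have := Fin.lt_def.1 h; omega),
    himage (g := fun i : Fin m => ⟨2 * i, by omega⟩)
      fun i j h => Fin.mk_lt_mk.2 (by have := Fin.lt_def.1 h; omega)]
  calc _ = ε * ε * ∑ S : {S : Finset (Fin (2 * m)) // S.card = m},
          (V.submatrix (S.1.orderEmbOfFin S.2) id).det *
            (V.submatrix (S.1ᶜ.orderEmbOfFin (card_compl_of_card_eq (two_mul m).symm S.2))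
              id).det := by
        rw [mul_sum]
        refine Fintype.sum_congr _ _ fun S => ?_
        rw [hmap S.2, hmap (card_compl_of_card_eq (two_mul m).symm S.2)]
        ring
    _ = _ := by
        rw [Matrix.sum_det_submatrix_mul_det_submatrix_compl]
        ring

/-- Ciucu's identity, proved by Fulmek: for
`T = {t_1 < … < t_{2m}}` a set of positive integers,
`∑ s_{λ(A)}(X_n) s_{λ(B)}(X_n) = 2^m s_{λ(t_2,t_4,…,t_{2m})}(X_n) s_{λ(t_1,t_3,…,t_{2m-1})}(X_n)`,
the sum being over all ordered pairs of disjoint sets `A, B` with `A ∪ B = T`,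
`|A| = |B| = m`. -/
theorem schur_identity_even (m n : ℕ) (T : Finset ℕ) (hT : T.card = 2 * m)
    (x : ℕ → ℚ)
    (E O : Finset ℕ)
    (hE : E = Finset.image
      (fun i : Fin m => T.orderEmbOfFin hT ⟨2 * (i : ℕ) + 1, by have := i.isLt; omega⟩)
      Finset.univ)
    (hO : O = Finset.image
      (fun i : Fin m => T.orderEmbOfFin hT ⟨2 * (i : ℕ), by have := i.isLt; omega⟩)
      Finset.univ) :
    ∑ A ∈ T.powersetCard m,
        schurF n A (fun i => x i) * schurF n (T \ A) (fun i => x i) =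
      2 ^ m * schurF n E (fun i => x i) * schurF n O (fun i => x i) := by
  subst hE hO
  rw [sum_powersetCard_sdiff_eq_sum_subtype T hT m fun A B => schurF n A _ * schurF n B _]
  exact sum_schurF_map_mul_schurF_map_compl n _ (T.orderEmbOfFin hT)
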